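/- Let L be a Hausdorff co-Heyting algebra, φ : L → L' a surjective homomorphism of co-Heyting algebras, and I = φ⁻¹({⊥}) its kernel. Then L' is Hausdorff if and only if I is closed for the codimetric topology, i.e. if and only if every a ∈ L such that for each natural number d there exists b ∈ I with a Δ b ∈ dL, itself belongs to I. -/

import Mathlib

/-- A prime filter of a bounded lattice: upward closed, closed under `⊓`,
contains `⊤`, does not contain `⊥`, and prime with respect to `⊔`. -/
def IsPrimeFilter {L : Type*} [Lattice L] [BoundedOrder L] (p : Set L) : Prop :=
  (∀ x ∈ p, ∀ y : L, x ≤ y → y ∈ p) ∧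
  (∀ x ∈ p, ∀ y ∈ p, x ⊓ y ∈ p) ∧
  (⊤ : L) ∈ p ∧ (⊥ : L) ∉ p ∧
  ∀ x y : L, x ⊔ y ∈ p → x ∈ p ∨ y ∈ p

/-- `dim a ≥ n`: there is a strictly increasing chain `p 0 ⊊ p 1 ⊊ ⋯ ⊊ p n`
of prime filters with `a ∈ p 0`. -/
def DimGE {L : Type*} [Lattice L] [BoundedOrder L] (a : L) (n : ℕ) : Prop :=
  ∃ p : Fin (n + 1) → Set L, (∀ i, IsPrimeFilter (p i)) ∧
    (∀ i j : Fin (n + 1), i < j → p i ⊂ p j) ∧ a ∈ p 0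

/-- `codim a ≥ n`: every prime filter `p` containing `a` admits a strictly
increasing chain `q n ⊊ ⋯ ⊊ q 1 ⊊ q 0 = p` of prime filters. -/
def CodimGE {L : Type*} [Lattice L] [BoundedOrder L] (a : L) (n : ℕ) : Prop :=
  ∀ p : Set L, IsPrimeFilter p → a ∈ p →
    ∃ q : Fin (n + 1) → Set L, (∀ i, IsPrimeFilter (q i)) ∧
      (∀ i j : Fin (n + 1), i < j → q j ⊂ q i) ∧ q 0 = p

/-- The strong order: `b ≪ a` iff for every `c`, `a ≤ b ⊔ c` implies `a ≤ c`. -/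
def StrongBelow {L : Type*} [Lattice L] (b a : L) : Prop :=
  ∀ c : L, a ≤ b ⊔ c → a ≤ c

/-- A co-Heyting algebra is Hausdorff (for the codimetric topology) iff
`⊥` is the only element of infinite codimension, i.e. `⋂_d dL = {⊥}`. -/
def CHAHausdorff (L : Type*) [CoheytingAlgebra L] : Prop :=
  ∀ a : L, (∀ d : ℕ, CodimGE a d) → a = ⊥

/-- A co-Heyting algebra is precompact iff for every `d` the equivalence
relation `a ≡_d b ⇔ a Δ b ∈ dL` has finitely many classes, i.e. admits a
finite set of representatives. -/
def CHAPrecompact (L : Type*) [CoheytingAlgebra L] : Prop :=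
  ∀ d : ℕ, ∃ F : Finset L, ∀ a : L, ∃ b ∈ F, CodimGE (symmDiff a b) d

/-!
The element `φ a` has codimension `≥ d` exactly when `a ≤ b ⊔ c` for some `b ∈ ker φ` and
`c ∈ dL`. Indeed, image and preimage under `φ` match the prime filters of `L'` with the prime
filters of `L` missing `ker φ`, together with their chains. Moreover a chain of length `d + 1`
below a prime filter `p` yields an element of `p` of codimension `≥ d + 1`: by induction the next
filter `q` of the chain contains some `y` of codimension `≥ d`, and for `z ∈ p \ q` the element
`z ⊓ y \ z` of `p` has codimension `≥ d + 1`, since any prime filter `r` containing `z` and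
`y \ z` lies strictly above a prime filter containing `y`. Hence `φ a` has infinite codimension
iff `a` lies in every `ker φ + dL`, that is, in the closure of `ker φ`: from `a ≤ b ⊔ c` one gets
`a ∆ (b ⊓ a) = a \ b ≤ c`.
-/

namespace IsPrimeFilter

variable {L : Type*} [Lattice L] [BoundedOrder L] {p : Set L} {x y : L}

lemma mem_of_le (hp : IsPrimeFilter p) (hx : x ∈ p) (hxy : x ≤ y) : y ∈ p :=
  hp.1 x hx y hxy

lemma inf_mem (hp : IsPrimeFilter p) (hx : x ∈ p) (hy : y ∈ p) : x ⊓ y ∈ p :=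
  hp.2.1 x hx y hy

lemma top_mem (hp : IsPrimeFilter p) : ⊤ ∈ p :=
  hp.2.2.1

lemma bot_notMem (hp : IsPrimeFilter p) : ⊥ ∉ p :=
  hp.2.2.2.1

lemma mem_or_mem (hp : IsPrimeFilter p) (h : x ⊔ y ∈ p) : x ∈ p ∨ y ∈ p :=
  hp.2.2.2.2 x y h

def complIdeal (hp : IsPrimeFilter p) : Order.Ideal L :=
  Order.IsIdeal.toIdeal (I := pᶜ)
    { IsLowerSet := fun _ _ hxy hy hx => hy (hp.mem_of_le hx hxy)
      Nonempty := ⟨⊥, hp.bot_notMem⟩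
      Directed := SupClosed.directedOn fun _ hx _ hy hxy => (hp.mem_or_mem hxy).elim hx hy }

@[simp]
lemma mem_complIdeal (hp : IsPrimeFilter p) : x ∈ hp.complIdeal ↔ x ∉ p :=
  Iff.rfl

end IsPrimeFilter

section Separation

variable {L : Type*} [DistribLattice L] [BoundedOrder L]

lemma exists_isPrimeFilter_of_notMem {I : Order.Ideal L} {a : L} (ha : a ∉ I) :
    ∃ p : Set L, IsPrimeFilter p ∧ a ∈ p ∧ Disjoint p I := by
  have hdisj : Disjoint (Order.PFilter.principal a : Set L) I :=
    Set.disjoint_left.2 fun _ hx hxI => ha (I.lower hx hxI)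
  obtain ⟨J, hJ, hIJ, hJdisj⟩ := DistribLattice.prime_ideal_of_disjoint_filter_ideal hdisj
  refine ⟨(J : Set L)ᶜ, ⟨?_, ?_, ?_, ?_, ?_⟩, ?_, ?_⟩
  · exact fun x hx y hxy hy => hx (J.lower hxy hy)
  · exact fun x hx y hy hxy => (hJ.mem_or_mem hxy).elim hx hy
  · exact hJ.toIsProper.top_notMem
  · exact not_not.2 J.bot_mem
  · exact fun x y hxy => not_and_or.1 fun h => hxy (J.sup_mem h.1 h.2)
  · exact Set.disjoint_left.1 hJdisj (Order.PFilter.mem_principal.2 le_rfl)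
  · exact disjoint_compl_left.mono_right hIJ

end Separation

section Height

variable {L : Type*} [Lattice L] [BoundedOrder L]

def HeightGE (p : Set L) (n : ℕ) : Prop :=
  ∃ q : Fin (n + 1) → Set L, (∀ i, IsPrimeFilter (q i)) ∧ StrictAnti q ∧ q 0 = p

lemma codimGE_iff {a : L} {n : ℕ} :
    CodimGE a n ↔ ∀ p, IsPrimeFilter p → a ∈ p → HeightGE p n :=
  Iff.rfl

lemma HeightGE.isPrimeFilter {p : Set L} {n : ℕ} (h : HeightGE p n) : IsPrimeFilter p := by
  obtain ⟨q, hq, -, rfl⟩ := h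
  exact hq 0

lemma heightGE_zero {p : Set L} (hp : IsPrimeFilter p) : HeightGE p 0 :=
  ⟨fun _ => p, fun _ => hp, Subsingleton.strictAnti (α := Fin 1) _, rfl⟩

lemma HeightGE.cons {p q : Set L} {n : ℕ} (h : HeightGE q n) (hp : IsPrimeFilter p)
    (hqp : q ⊂ p) : HeightGE p (n + 1) := by
  obtain ⟨r, hr, hr_anti, rfl⟩ := h
  refine ⟨Fin.cons p r, Fin.cases hp hr, Fin.strictAnti_iff_succ_lt.2 fun i => ?_, rfl⟩
  cases i using Fin.cases with
  | zero => exact hqp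
  | succ i => simpa only [Fin.cons_succ, ← Fin.succ_castSucc] using hr_anti i.castSucc_lt_succ

lemma HeightGE.tail {p : Set L} {n : ℕ} (h : HeightGE p (n + 1)) :
    ∃ q ⊂ p, HeightGE q n := by
  obtain ⟨r, hr, hr_anti, rfl⟩ := h
  exact ⟨r 1, hr_anti Fin.zero_lt_one, Fin.tail r, fun i => hr i.succ,
    hr_anti.comp_strictMono Fin.strictMono_succ, rfl⟩

lemma codimGE_zero (a : L) : CodimGE a 0 :=
  fun _ hp _ => heightGE_zero hp

lemma codimGE_bot (n : ℕ) : CodimGE (⊥ : L) n :=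
  fun _ hp hbot => (hp.bot_notMem hbot).elim

lemma CodimGE.of_le {a b : L} {n : ℕ} (h : CodimGE b n) (hab : a ≤ b) : CodimGE a n :=
  fun _ hp ha => h _ hp (hp.mem_of_le ha hab)

lemma CodimGE.sup {a b : L} {n : ℕ} (ha : CodimGE a n) (hb : CodimGE b n) :
    CodimGE (a ⊔ b) n :=
  fun _ hp hab => (hp.mem_or_mem hab).elim (ha _ hp) (hb _ hp)

variable (L) in
/-- The ideal `dL`. -/
def codimIdeal (d : ℕ) : Order.Ideal L :=
  Order.IsIdeal.toIdeal (I := {a | CodimGE a d})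
    { IsLowerSet := fun _ _ hab hb => CodimGE.of_le hb hab
      Nonempty := ⟨⊥, codimGE_bot d⟩
      Directed := SupClosed.directedOn fun _ ha _ hb => ha.sup hb }

@[simp]
lemma mem_codimIdeal {a : L} {d : ℕ} : a ∈ codimIdeal L d ↔ CodimGE a d :=
  Iff.rfl

end Height

section Coheyting

variable {L : Type*} [CoheytingAlgebra L]

/-- Separate `x` from the ideal generated by `z` and the complement of `q`. -/
lemma IsPrimeFilter.exists_ssubset_of_sdiff_mem {q : Set L} (hq : IsPrimeFilter q) {x z : L}
    (hz : z ∈ q) (hxz : x \ z ∈ q) :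
    ∃ p ⊂ q, IsPrimeFilter p ∧ x ∈ p := by
  set J := hq.complIdeal ⊔ Order.Ideal.principal z
  have hxJ : x ∉ J := by
    rintro hx
    obtain ⟨s, hs, hxs⟩ := (Lattice.mem_ideal_sup_principal z x _).1 hx
    exact hs (hq.mem_of_le hxz (sdiff_le_iff'.2 hxs))
  obtain ⟨p, hp, hxp, hpJ⟩ := exists_isPrimeFilter_of_notMem hxJ
  have hpq : p ⊆ q := fun y hyp => by_contra fun hyq =>
    Set.disjoint_left.1 hpJ hyp (le_sup_left (a := hq.complIdeal) (hq.mem_complIdeal.2 hyq))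
  have hzp : z ∉ p := fun hzp =>
    Set.disjoint_left.1 hpJ hzp (le_sup_right (b := Order.Ideal.principal z)
      Order.Ideal.mem_principal_self)
  exact ⟨p, ⟨hpq, fun hqp => hzp (hqp hz)⟩, hp, hxp⟩

lemma CodimGE.inf_sdiff {y : L} {n : ℕ} (h : CodimGE y n) (z : L) :
    CodimGE (z ⊓ y \ z) (n + 1) := by
  intro r hr hyzr
  obtain ⟨q, hqr, hq, hyq⟩ := hr.exists_ssubset_of_sdiff_mem
    (hr.mem_of_le hyzr inf_le_left) (hr.mem_of_le hyzr inf_le_right)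
  exact (codimGE_iff.1 h q hq hyq).cons hr hqr

lemma HeightGE.exists_codimGE_mem {p : Set L} {n : ℕ} (h : HeightGE p n) :
    ∃ y ∈ p, CodimGE y n := by
  induction n generalizing p with
  | zero => exact ⟨⊤, h.isPrimeFilter.top_mem, codimGE_zero ⊤⟩
  | succ n ih =>
    obtain ⟨q, hqp, hq⟩ := h.tail
    obtain ⟨y, hyq, hy⟩ := ih hq
    obtain ⟨z, hzp, hzq⟩ := Set.exists_of_ssubset hqp
    have hyz : y \ z ∈ q :=
      (hq.isPrimeFilter.mem_or_mem (hq.isPrimeFilter.mem_of_le hyq le_sup_sdiff)).resolve_left hzq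
    exact ⟨z ⊓ y \ z, h.isPrimeFilter.inf_mem hzp (hqp.1 hyz), hy.inf_sdiff z⟩

end Coheyting

section Hom

variable {L L' F : Type*}

section Lattice

variable [Lattice L] [BoundedOrder L] [Lattice L'] [BoundedOrder L'] [FunLike F L L']

def kerIdeal [SupBotHomClass F L L'] (φ : F) : Order.Ideal L :=
  Order.IsIdeal.toIdeal (I := {a | φ a = ⊥})
    { IsLowerSet := fun _ _ hab hb => le_bot_iff.1 (hb ▸ OrderHomClass.mono φ hab)
      Nonempty := ⟨⊥, map_bot φ⟩
      Directed := SupClosed.directedOn fun a (ha : φ a = ⊥) b (hb : φ b = ⊥) => by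
        simp only [Set.mem_ofPred_eq, map_sup, ha, hb, sup_idem] }

@[simp]
lemma mem_kerIdeal [SupBotHomClass F L L'] {φ : F} {a : L} : a ∈ kerIdeal φ ↔ φ a = ⊥ :=
  Iff.rfl

variable [BoundedLatticeHomClass F L L']

lemma IsPrimeFilter.preimage (φ : F) {q : Set L'} (hq : IsPrimeFilter q) :
    IsPrimeFilter (φ ⁻¹' q) :=
  ⟨fun _ hx _ hxy => hq.mem_of_le hx (OrderHomClass.mono φ hxy),
    fun x hx y hy => by simpa only [Set.mem_preimage, map_inf] using hq.inf_mem hx hy,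
    by simpa only [Set.mem_preimage, map_top] using hq.top_mem,
    by simpa only [Set.mem_preimage, map_bot] using hq.bot_notMem,
    fun x y hxy => hq.mem_or_mem (by simpa only [Set.mem_preimage, map_sup] using hxy)⟩

lemma HeightGE.preimage {φ : F} (hφ : Function.Surjective φ) {q : Set L'} {n : ℕ}
    (h : HeightGE q n) : HeightGE (φ ⁻¹' q) n := by
  obtain ⟨r, hr, hr_anti, rfl⟩ := h
  have hpre : StrictMono (Set.preimage φ) :=
    Monotone.strictMono_of_injective (fun _ _ => Set.preimage_mono) (Set.preimage_injective.2 hφ)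
  exact ⟨fun i => φ ⁻¹' r i, fun i => (hr i).preimage φ, hpre.comp_strictAnti hr_anti, rfl⟩

end Lattice

variable [CoheytingAlgebra L] [CoheytingAlgebra L'] [FunLike F L L'] [CoheytingHomClass F L L']
  {φ : F}

/-- If `φ x = φ z` with `z ∈ p`, then `z ≤ x ⊔ z \ x` and `z \ x` lies in the kernel. -/
lemma IsPrimeFilter.preimage_image_eq {p : Set L} (hp : IsPrimeFilter p)
    (hker : ∀ x ∈ p, φ x ≠ ⊥) : φ ⁻¹' (φ '' p) = p := by
  refine (Set.subset_preimage_image φ p).antisymm' fun x ⟨z, hz, hzx⟩ => ?_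
  refine (hp.mem_or_mem (hp.mem_of_le hz le_sup_sdiff)).resolve_right fun hzx' => ?_
  exact hker _ hzx' (by rw [map_sdiff, hzx, sdiff_self])

lemma IsPrimeFilter.image (hφ : Function.Surjective φ) {p : Set L} (hp : IsPrimeFilter p)
    (hker : ∀ x ∈ p, φ x ≠ ⊥) : IsPrimeFilter (φ '' p) := by
  have hsat := hp.preimage_image_eq hker
  refine ⟨?_, ?_, ⟨⊤, hp.top_mem, map_top φ⟩, fun ⟨x, hx, hx0⟩ => hker x hx hx0, ?_⟩
  · rintro _ ⟨x, hx, rfl⟩ y' hxy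
    obtain ⟨y, rfl⟩ := hφ y'
    exact ⟨x ⊔ y, hp.mem_of_le hx le_sup_left, by rw [map_sup, sup_eq_right.2 hxy]⟩
  · rintro _ ⟨x, hx, rfl⟩ _ ⟨y, hy, rfl⟩
    exact ⟨x ⊓ y, hp.inf_mem hx hy, map_inf φ x y⟩
  · intro x' y' hxy
    obtain ⟨x, rfl⟩ := hφ x'
    obtain ⟨y, rfl⟩ := hφ y'
    rw [← map_sup, ← Set.mem_preimage, hsat] at hxy
    exact (hp.mem_or_mem hxy).imp (Set.mem_image_of_mem φ) (Set.mem_image_of_mem φ)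

lemma HeightGE.image (hφ : Function.Surjective φ) {p : Set L} {n : ℕ} (h : HeightGE p n)
    (hker : ∀ x ∈ p, φ x ≠ ⊥) : HeightGE (φ '' p) n := by
  obtain ⟨r, hr, hr_anti, rfl⟩ := h
  have hker_r : ∀ i, ∀ x ∈ r i, φ x ≠ ⊥ := fun i x hx =>
    hker x (hr_anti.antitone (Fin.zero_le i) hx)
  refine ⟨fun i => φ '' r i, fun i => (hr i).image hφ (hker_r i), fun i j hij => ?_, rfl⟩
  refine ⟨Set.image_mono (hr_anti hij).1, fun hji => (hr_anti hij).2 ?_⟩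
  rw [← (hr j).preimage_image_eq (hker_r j)]
  exact (Set.subset_preimage_image φ _).trans (Set.preimage_mono hji)

lemma CodimGE.map (hφ : Function.Surjective φ) {a : L} {n : ℕ} (h : CodimGE a n) :
    CodimGE (φ a) n := by
  intro q hq ha
  rw [← Set.image_preimage_eq q hφ]
  exact (codimGE_iff.1 h _ (hq.preimage φ) ha).image hφ fun x hx hx0 => hq.bot_notMem (hx0 ▸ hx)

end Hom

section Hausdorff

variable {L L' F : Type*} [CoheytingAlgebra L] [CoheytingAlgebra L'] [FunLike F L L']
  [CoheytingHomClass F L L'] {φ : F}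

theorem codimGE_map_iff (hφ : Function.Surjective φ) {a : L} {d : ℕ} :
    CodimGE (φ a) d ↔ a ∈ kerIdeal φ ⊔ codimIdeal L d := by
  constructor
  · intro h
    by_contra ha
    obtain ⟨p, hp, hap, hpJ⟩ := exists_isPrimeFilter_of_notMem ha
    have hker : ∀ x ∈ p, φ x ≠ ⊥ := fun x hx hx0 =>
      Set.disjoint_left.1 hpJ hx (le_sup_left (a := kerIdeal φ) (mem_kerIdeal.2 hx0))
    have hp_height : HeightGE p d := by
      rw [← hp.preimage_image_eq hker]
      exact HeightGE.preimage hφ (h _ (hp.image hφ hker) (Set.mem_image_of_mem φ hap))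
    obtain ⟨y, hyp, hy⟩ := hp_height.exists_codimGE_mem
    exact Set.disjoint_left.1 hpJ hyp (le_sup_right (b := codimIdeal L d) (mem_codimIdeal.2 hy))
  · rintro ⟨b, hb, c, hc, habc⟩
    refine (CodimGE.map hφ hc).of_le ?_
    simpa only [map_sup, mem_kerIdeal.1 hb, bot_sup_eq] using OrderHomClass.mono φ habc

end Hausdorff

theorem stmt11_general {L L' : Type*} [CoheytingAlgebra L] [CoheytingAlgebra L']
    (φ : CoheytingHom L L') (hφ : Function.Surjective φ) :
    CHAHausdorff L' ↔
      ∀ a : L, (∀ d : ℕ, ∃ b : L, φ b = ⊥ ∧ CodimGE (symmDiff a b) d) → φ a = ⊥ := by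
  constructor
  · intro hL' a ha
    refine hL' _ fun d => (codimGE_map_iff hφ).2 ?_
    obtain ⟨b, hb, hab⟩ := ha d
    exact ⟨b, hb, symmDiff a b, hab, (le_symmDiff_sup_right a b).trans_eq (sup_comm _ _)⟩
  · intro hclosed a' ha'
    obtain ⟨a, rfl⟩ := hφ a'
    refine hclosed a fun d => ?_
    obtain ⟨b, hb, c, hc, habc⟩ := (codimGE_map_iff hφ).1 (ha' d)
    refine ⟨b ⊓ a, by rw [map_inf, mem_kerIdeal.1 hb, bot_inf_eq], hc.of_le ?_⟩
    rw [symmDiff_of_ge inf_le_right, sdiff_inf_self_right]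
    exact sdiff_le_iff.2 habc

theorem stmt11 {L L' : Type*} [CoheytingAlgebra L] [CoheytingAlgebra L']
    (hL : CHAHausdorff L)
    (φ : CoheytingHom L L') (hφ : Function.Surjective φ) :
    CHAHausdorff L' ↔
      ∀ a : L, (∀ d : ℕ, ∃ b : L, φ b = ⊥ ∧ CodimGE (symmDiff a b) d) → φ a = ⊥ :=
  stmt11_general φ hφ
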